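/- Under Assumption 2.1, the step-size bound 0 < w ≤ min{1, 𝔡/√(2β⁻¹(J(z⁰) − inf F)), (β − ε)/(2C·A_max)} for some β, ε > 0, and sequences (z^k), (x̃^k) with z^{k+1} = (1 − w)z^k + w·x̃^k, J̃_{z^k}(x̃^k) ≤ J̃_{z^k}(z^k), and e^k ∈ ∂J̃_{z^k}(x̃^k) with e^k → 0 (where J̃_z(x) := (1/2)‖A(z) + A'(z)(x − z)‖² + F(x) + (β/2)‖x − z‖² and ∂ is the convex subdifferential), every accumulation point x̂ of (z^k) satisfies the criticality condition −A'(x̂)*A(x̂) ∈ ∂F(x̂), i.e. F(y) ≥ F(x̂) − ⟨A'(x̂)*A(x̂), y − x̂⟩ for all y, and J(x̂) = L where L := lim_k J(z^k) (Theorem 2.1(ii)). -/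

import Mathlib

/-!
Convexity of `F` and of `‖·‖²`, the quadratic bound on the linearisation error and the
restriction `w ≤ (β - ε) / (2 C A_max)` give the sufficient decrease
`J(z^{k+1}) + w (ε/2) ‖x̃^k - z^k‖² ≤ J(z^k)`. The error bound applies because
`(β/2) ‖x̃^k - z^k‖² ≤ J(z⁰) - inf F`, so the other restriction on `w` keeps `z^{k+1}` within `𝔡`
of `z^k`. Hence `J(z^k)` decreases to some `L` and `‖x̃^k - z^k‖` is square-summable, so
`x̃^{φ k} → x̂` whenever `z^{φ k} → x̂`.

Passing to the limit in `e^k ∈ ∂J̃_{z^k}(x̃^k)`, lower semicontinuity of `F` shows that `x̂`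
minimises `J̃_{x̂}`; comparing `J̃_{x̂}(x̂)` with the values of `J̃_{x̂}` on the segment from `x̂`
to `y`, near `x̂`, yields the criticality condition. Lower semicontinuity also gives
`J(x̂) ≤ L`, while `J(z^{k+1}) ≤ (1 - w) J(z^k) + w J̃_{z^k}(x̃^k)` and the optimality condition
tested at `x̂` give `L ≤ J(x̂)`.
-/

open Filter Topology Metric Bornology
open scoped RealInnerProductSpace

/-- The objective `J(x) = (1/2)‖A(x)‖² + F(x)` with extended-real-valued `F`. -/
noncomputable def Jobj {N M : ℕ} (F : EuclideanSpace ℝ (Fin N) → EReal)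
    (A : EuclideanSpace ℝ (Fin N) → EuclideanSpace ℝ (Fin M))
    (x : EuclideanSpace ℝ (Fin N)) : EReal :=
  ((1 / 2 * ‖A x‖ ^ 2 : ℝ) : EReal) + F x

/-- The linearisation `A_z(x) = A(z) + A'(z)(x − z)`. -/
noncomputable def Alin {N M : ℕ}
    (A : EuclideanSpace ℝ (Fin N) → EuclideanSpace ℝ (Fin M))
    (A' : EuclideanSpace ℝ (Fin N) → (EuclideanSpace ℝ (Fin N) →L[ℝ] EuclideanSpace ℝ (Fin M)))
    (z x : EuclideanSpace ℝ (Fin N)) : EuclideanSpace ℝ (Fin M) :=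
  A z + A' z (x - z)

/-- The linearised objective `J_z(x) = (1/2)‖A_z(x)‖² + F(x)`. -/
noncomputable def Jlin {N M : ℕ} (F : EuclideanSpace ℝ (Fin N) → EReal)
    (A : EuclideanSpace ℝ (Fin N) → EuclideanSpace ℝ (Fin M))
    (A' : EuclideanSpace ℝ (Fin N) → (EuclideanSpace ℝ (Fin N) →L[ℝ] EuclideanSpace ℝ (Fin M)))
    (z x : EuclideanSpace ℝ (Fin N)) : EReal :=
  ((1 / 2 * ‖Alin A A' z x‖ ^ 2 : ℝ) : EReal) + F x

/-- The proximally relaxed linearised objective `J̃_z(x) = J_z(x) + (β/2)‖x − z‖²`. -/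
noncomputable def Jprox {N M : ℕ} (F : EuclideanSpace ℝ (Fin N) → EReal)
    (A : EuclideanSpace ℝ (Fin N) → EuclideanSpace ℝ (Fin M))
    (A' : EuclideanSpace ℝ (Fin N) → (EuclideanSpace ℝ (Fin N) →L[ℝ] EuclideanSpace ℝ (Fin M)))
    (β : ℝ) (z x : EuclideanSpace ℝ (Fin N)) : EReal :=
  Jlin F A A' z x + ((β / 2 * ‖x - z‖ ^ 2 : ℝ) : EReal)

open Set

lemma norm_smul_add_smul_sq_le {E : Type*} [NormedAddCommGroup E] [InnerProductSpace ℝ E]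
    {a b : ℝ} (ha : 0 ≤ a) (hb : 0 ≤ b) (hab : a + b = 1) (x y : E) :
    ‖a • x + b • y‖ ^ 2 ≤ a * ‖x‖ ^ 2 + b * ‖y‖ ^ 2 := by
  have hexp : ‖a • x + b • y‖ ^ 2
      = a ^ 2 * ‖x‖ ^ 2 + 2 * (a * b) * ⟪x, y⟫ + b ^ 2 * ‖y‖ ^ 2 := by
    rw [norm_add_sq_real, real_inner_smul_left, real_inner_smul_right, norm_smul, norm_smul,
      Real.norm_of_nonneg ha, Real.norm_of_nonneg hb]
    ring
  have hcross : 2 * ⟪x, y⟫ ≤ ‖x‖ ^ 2 + ‖y‖ ^ 2 := by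
    linarith [norm_sub_sq_real x y, sq_nonneg ‖x - y‖]
  nlinarith [mul_le_mul_of_nonneg_left hcross (mul_nonneg ha hb)]

lemma half_sq_norm_le_of_norm_sub_le {E : Type*} [NormedAddCommGroup E] [InnerProductSpace ℝ E]
    {a b : E} {R δ : ℝ} (ha : ‖a‖ ≤ R) (hab : ‖a - b‖ ≤ δ) :
    1 / 2 * ‖a‖ ^ 2 ≤ 1 / 2 * ‖b‖ ^ 2 + R * δ := by
  have hid := norm_sub_sq_real a (a - b)
  rw [sub_sub_cancel] at hid
  linarith [real_inner_le_norm a (a - b), sq_nonneg ‖a - b‖,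
    mul_le_mul ha hab (norm_nonneg _) ((norm_nonneg a).trans ha)]

lemma nonpos_of_forall_le_mul {a K : ℝ} (h : ∀ t : ℝ, 0 < t → t ≤ 1 → a ≤ t * K) : a ≤ 0 := by
  have hlim : Tendsto (fun t : ℝ => t * K) (𝓝[>] 0) (𝓝 0) :=
    ((continuous_mul_const K).tendsto' 0 0 (zero_mul K)).mono_left nhdsWithin_le_nhds
  refine ge_of_tendsto hlim ?_
  filter_upwards [Ioc_mem_nhdsGT one_pos] with t ht using h t ht.1 ht.2

lemma mul_le_of_le_div_of_pos {w b c : ℝ} (hw : 0 < w) (hc : 0 ≤ c) (h : w ≤ b / c) :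
    w * c ≤ b := by
  rcases hc.eq_or_lt with rfl | hc
  · rw [div_zero] at h
    linarith
  · exact (le_div_iff₀ hc).1 h

lemma mul_le_of_le_div_sqrt {β D d w δ : ℝ} (hβ : 0 < β) (hw : 0 < w)
    (hdD : β / 2 * d ^ 2 ≤ D) (hwδ : w ≤ δ / √(2 * β⁻¹ * D)) : w * d ≤ δ := by
  have hdR : d ≤ √(2 * β⁻¹ * D) := by
    refine Real.le_sqrt_of_sq_le ?_
    rw [show 2 * β⁻¹ * D = D / (β / 2) by field_simp, le_div_iff₀ (by positivity)]
    linarith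
  calc w * d ≤ w * √(2 * β⁻¹ * D) := mul_le_mul_of_nonneg_left hdR hw.le
    _ ≤ δ := mul_le_of_le_div_of_pos hw (Real.sqrt_nonneg _) hwδ

lemma tendsto_of_add_mul_sq_le {a d : ℕ → ℝ} {c m : ℝ} (hc : 0 < c) (hm : ∀ k, m ≤ a k)
    (hdec : ∀ k, a (k + 1) + c * d k ^ 2 ≤ a k) :
    Tendsto a atTop (𝓝 (⨅ k, a k)) ∧ Tendsto d atTop (𝓝 0) := by
  have hanti : Antitone a := antitone_nat_of_succ_le fun k => by
    linarith [hdec k, mul_nonneg hc.le (sq_nonneg (d k))]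
  refine ⟨tendsto_atTop_ciInf hanti ⟨m, Set.forall_mem_range.2 hm⟩, ?_⟩
  have hsum : Summable fun k => d k ^ 2 := by
    refine summable_of_sum_range_le (c := (a 0 - m) / c) (fun k => sq_nonneg _) fun n => ?_
    have htel : c * ∑ i ∈ Finset.range n, d i ^ 2 ≤ a 0 - a n := by
      rw [Finset.mul_sum, ← Finset.sum_range_sub' a]
      exact Finset.sum_le_sum fun k _ => by linarith [hdec k]
    rw [le_div_iff₀ hc]
    linarith [hm n]
  have habs := (Real.continuous_sqrt.tendsto 0).comp hsum.tendsto_atTop_zero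
  simp only [Real.sqrt_zero, Function.comp_def, Real.sqrt_sq_eq_abs] at habs
  exact (tendsto_zero_iff_abs_tendsto_zero d).2 habs

lemma LowerSemicontinuous.le_coe_of_tendsto {α ι : Type*} [TopologicalSpace α] {l : Filter ι}
    [l.NeBot] {F : α → EReal} (hF : LowerSemicontinuous F) {xs : ι → α} {x : α}
    (hx : Tendsto xs l (𝓝 x)) {c : ι → ℝ} {c₀ : ℝ} (hc : Tendsto c l (𝓝 c₀))
    (hle : ∀ k, F (xs k) ≤ c k) : F x ≤ c₀ := by
  by_contra! h
  obtain ⟨b, hcb, hbF⟩ := exists_between h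
  obtain ⟨k, hbk, hkb⟩ := ((hx.eventually (hF x b hbF)).and
    ((EReal.tendsto_coe.2 hc).eventually_lt_const hcb)).exists
  exact (hbk.trans_le (hle k)).not_gt hkb

def IsConvexEReal {E : Type*} [AddCommGroup E] [Module ℝ E] (F : E → EReal) : Prop :=
  ∀ x y : E, ∀ a b : ℝ, 0 ≤ a → 0 ≤ b → a + b = 1 →
    F (a • x + b • y) ≤ (a : EReal) * F x + (b : EReal) * F y

lemma IsConvexEReal.combo_le {E : Type*} [AddCommGroup E] [Module ℝ E] {F : E → EReal}
    (hF : IsConvexEReal F) (hbot : ∀ x, F x ≠ ⊥) {x y : E} (hx : F x ≠ ⊤) (hy : F y ≠ ⊤)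
    {a b : ℝ} (ha : 0 ≤ a) (hb : 0 ≤ b) (hab : a + b = 1) :
    F (a • x + b • y) ≠ ⊤ ∧ (F (a • x + b • y)).toReal ≤ a * (F x).toReal + b * (F y).toReal := by
  have h := hF x y a b ha hb hab
  rw [← EReal.coe_toReal hx (hbot x), ← EReal.coe_toReal hy (hbot y), ← EReal.coe_mul,
    ← EReal.coe_mul, ← EReal.coe_add] at h
  exact ⟨ne_top_of_le_ne_top (EReal.coe_ne_top _) h,
    (EReal.toReal_le_toReal h (hbot _) (EReal.coe_ne_top _)).trans_eq (EReal.toReal_coe _)⟩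

section ProxLinear

variable {N M : ℕ} {F : EuclideanSpace ℝ (Fin N) → EReal}
  {A : EuclideanSpace ℝ (Fin N) → EuclideanSpace ℝ (Fin M)}
  {A' : EuclideanSpace ℝ (Fin N) → (EuclideanSpace ℝ (Fin N) →L[ℝ] EuclideanSpace ℝ (Fin M))}
  {β : ℝ}

noncomputable def JproxSmooth (A : EuclideanSpace ℝ (Fin N) → EuclideanSpace ℝ (Fin M))
    (A' : EuclideanSpace ℝ (Fin N) → (EuclideanSpace ℝ (Fin N) →L[ℝ] EuclideanSpace ℝ (Fin M)))
    (β : ℝ) (z x : EuclideanSpace ℝ (Fin N)) : ℝ :=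
  1 / 2 * ‖Alin A A' z x‖ ^ 2 + β / 2 * ‖x - z‖ ^ 2

@[simp] lemma Alin_self (z : EuclideanSpace ℝ (Fin N)) : Alin A A' z z = A z := by
  simp [Alin]

lemma Alin_smul_add_smul (z x : EuclideanSpace ℝ (Fin N)) (t : ℝ) :
    Alin A A' z ((1 - t) • z + t • x) = (1 - t) • A z + t • Alin A A' z x := by
  have hdiff : (1 - t) • z + t • x - z = t • (x - z) := by module
  simp only [Alin, hdiff, map_smul]
  module

lemma JproxSmooth_self (z : EuclideanSpace ℝ (Fin N)) :
    JproxSmooth A A' β z z = 1 / 2 * ‖A z‖ ^ 2 := by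
  simp [JproxSmooth]

lemma JproxSmooth_smul_add_smul (x y : EuclideanSpace ℝ (Fin N)) (t : ℝ) :
    JproxSmooth A A' β x ((1 - t) • x + t • y) = 1 / 2 * ‖A x‖ ^ 2 + t * ⟪A x, A' x (y - x)⟫
      + t ^ 2 * (1 / 2 * ‖A' x (y - x)‖ ^ 2 + β / 2 * ‖y - x‖ ^ 2) := by
  have hlin : Alin A A' x ((1 - t) • x + t • y) = A x + t • A' x (y - x) := by
    rw [Alin_smul_add_smul, Alin]; module
  have hdiff : (1 - t) • x + t • y - x = t • (y - x) := by module
  rw [JproxSmooth, hlin, hdiff, norm_add_sq_real, real_inner_smul_right, norm_smul, norm_smul,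
    Real.norm_eq_abs, mul_pow, mul_pow, sq_abs]
  ring

lemma Jprox_eq_coe_add (z x : EuclideanSpace ℝ (Fin N)) :
    Jprox F A A' β z x = (JproxSmooth A A' β z x : EReal) + F x := by
  rw [Jprox, Jlin, JproxSmooth, EReal.coe_add, add_right_comm]

lemma Jprox_eq_coe {z x : EuclideanSpace ℝ (Fin N)} (hx : F x ≠ ⊤) (hxb : F x ≠ ⊥) :
    Jprox F A A' β z x = ((JproxSmooth A A' β z x + (F x).toReal : ℝ) : EReal) := by
  rw [Jprox_eq_coe_add, EReal.coe_add, EReal.coe_toReal hx hxb]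

lemma Jobj_eq_coe {x : EuclideanSpace ℝ (Fin N)} (hx : F x ≠ ⊤) (hxb : F x ≠ ⊥) :
    Jobj F A x = ((1 / 2 * ‖A x‖ ^ 2 + (F x).toReal : ℝ) : EReal) := by
  rw [Jobj, EReal.coe_add, EReal.coe_toReal hx hxb]

lemma toReal_Jprox {z x : EuclideanSpace ℝ (Fin N)} (hx : F x ≠ ⊤) (hxb : F x ≠ ⊥) :
    (Jprox F A A' β z x).toReal = JproxSmooth A A' β z x + (F x).toReal := by
  rw [Jprox_eq_coe hx hxb, EReal.toReal_coe]

lemma toReal_Jobj {x : EuclideanSpace ℝ (Fin N)} (hx : F x ≠ ⊤) (hxb : F x ≠ ⊥) :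
    (Jobj F A x).toReal = 1 / 2 * ‖A x‖ ^ 2 + (F x).toReal := by
  rw [Jobj_eq_coe hx hxb, EReal.toReal_coe]

lemma coe_toReal_Jobj {x : EuclideanSpace ℝ (Fin N)} (hx : F x ≠ ⊤) (hxb : F x ≠ ⊥) :
    ((Jobj F A x).toReal : EReal) = Jobj F A x := by
  rw [Jobj_eq_coe hx hxb, EReal.toReal_coe]

lemma Jobj_ne_top {x : EuclideanSpace ℝ (Fin N)} (hx : F x ≠ ⊤) (hxb : F x ≠ ⊥) :
    Jobj F A x ≠ ⊤ := by
  rw [Jobj_eq_coe hx hxb]; exact EReal.coe_ne_top _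

lemma Jobj_ne_bot {x : EuclideanSpace ℝ (Fin N)} (hx : F x ≠ ⊤) (hxb : F x ≠ ⊥) :
    Jobj F A x ≠ ⊥ := by
  rw [Jobj_eq_coe hx hxb]; exact EReal.coe_ne_bot _

lemma le_toReal_Jobj {m : ℝ} (hm : ∀ x, (m : EReal) ≤ F x) {x : EuclideanSpace ℝ (Fin N)}
    (hx : F x ≠ ⊤) (hxb : F x ≠ ⊥) : m ≤ (Jobj F A x).toReal := by
  rw [toReal_Jobj hx hxb]
  have := EReal.toReal_le_toReal (hm x) (EReal.coe_ne_bot m) hx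
  rw [EReal.toReal_coe] at this
  linarith [sq_nonneg ‖A x‖]

lemma Jobj_le_Jobj_iff {x y : EuclideanSpace ℝ (Fin N)} (hx : F x ≠ ⊤) (hxb : F x ≠ ⊥)
    (hy : F y ≠ ⊤) (hyb : F y ≠ ⊥) :
    Jobj F A x ≤ Jobj F A y ↔ (Jobj F A x).toReal ≤ (Jobj F A y).toReal := by
  rw [← coe_toReal_Jobj hx hxb, ← coe_toReal_Jobj hy hyb, EReal.coe_le_coe_iff, EReal.toReal_coe,
    EReal.toReal_coe]

lemma Jprox_self (z : EuclideanSpace ℝ (Fin N)) : Jprox F A A' β z z = Jobj F A z := by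
  rw [Jprox_eq_coe_add, JproxSmooth_self, Jobj]

lemma le_Jobj (x : EuclideanSpace ℝ (Fin N)) : F x ≤ Jobj F A x := by
  rw [Jobj]
  exact le_add_of_nonneg_left (EReal.coe_nonneg.2 (by positivity))

lemma tendsto_Alin {ι : Type*} {l : Filter ι} {zs xs : ι → EuclideanSpace ℝ (Fin N)}
    {z x : EuclideanSpace ℝ (Fin N)} (hzs : Tendsto zs l (𝓝 z)) (hxs : Tendsto xs l (𝓝 x))
    (hA : Tendsto (fun k => A (zs k)) l (𝓝 (A z)))
    (hA' : Tendsto (fun k => A' (zs k)) l (𝓝 (A' z))) :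
    Tendsto (fun k => Alin A A' (zs k) (xs k)) l (𝓝 (Alin A A' z x)) :=
  hA.add ((isBoundedBilinearMap_apply.continuous.tendsto _).comp
    (hA'.prodMk_nhds (hxs.sub hzs)))

lemma tendsto_JproxSmooth {ι : Type*} {l : Filter ι} {zs xs : ι → EuclideanSpace ℝ (Fin N)}
    {z x : EuclideanSpace ℝ (Fin N)} (hzs : Tendsto zs l (𝓝 z)) (hxs : Tendsto xs l (𝓝 x))
    (hA : Tendsto (fun k => A (zs k)) l (𝓝 (A z)))
    (hA' : Tendsto (fun k => A' (zs k)) l (𝓝 (A' z))) :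
    Tendsto (fun k => JproxSmooth A A' β (zs k) (xs k)) l (𝓝 (JproxSmooth A A' β z x)) :=
  (((tendsto_Alin hzs hxs hA hA').norm.pow 2).const_mul _).add
    (((hxs.sub hzs).norm.pow 2).const_mul _)

theorem toReal_Jobj_step_le (hFconv : IsConvexEReal F) (hbot : ∀ x, F x ≠ ⊥) {Amax C w ε : ℝ}
    (hAmax : ∀ x, F x ≠ ⊤ → ‖A x‖ ≤ Amax) (hw0 : 0 < w) (hw1 : w ≤ 1)
    (hwA : w * (2 * C * Amax) ≤ β - ε) {z x z' : EuclideanSpace ℝ (Fin N)}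
    (hz : F z ≠ ⊤) (hx : F x ≠ ⊤) (hz' : z' = (1 - w) • z + w • x)
    (herr : ‖A z' - Alin A A' z z'‖ ≤ C * ‖z' - z‖ ^ 2) :
    F z' ≠ ⊤ ∧ (Jobj F A z').toReal + w * (ε / 2) * ‖x - z‖ ^ 2
      ≤ (1 - w) * (Jobj F A z).toReal + w * (Jprox F A A' β z x).toReal := by
  obtain ⟨hz'F, hFz'⟩ := hFconv.combo_le hbot hz hx (sub_nonneg.2 hw1) hw0.le (by ring)
  rw [← hz'] at hz'F hFz'
  have hstep : ‖z' - z‖ = w * ‖x - z‖ := by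
    rw [hz', show (1 - w) • z + w • x - z = w • (x - z) by module, norm_smul,
      Real.norm_of_nonneg hw0.le]
  have hlin : 1 / 2 * ‖A z'‖ ^ 2 ≤ 1 / 2 * ‖Alin A A' z z'‖ ^ 2 + Amax * (C * ‖z' - z‖ ^ 2) :=
    half_sq_norm_le_of_norm_sub_le (hAmax z' hz'F) herr
  have hconv : ‖Alin A A' z z'‖ ^ 2 ≤ (1 - w) * ‖A z‖ ^ 2 + w * ‖Alin A A' z x‖ ^ 2 := by
    rw [hz', Alin_smul_add_smul]
    exact norm_smul_add_smul_sq_le (sub_nonneg.2 hw1) hw0.le (by ring) _ _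
  have hrem : Amax * (C * ‖z' - z‖ ^ 2) ≤ (β - ε) * (w * ‖x - z‖ ^ 2 / 2) := by
    rw [hstep, show Amax * (C * (w * ‖x - z‖) ^ 2) = w * (2 * C * Amax) * (w * ‖x - z‖ ^ 2 / 2)
      by ring]
    exact mul_le_mul_of_nonneg_right hwA (by positivity)
  refine ⟨hz'F, ?_⟩
  rw [toReal_Jobj hz'F (hbot _), toReal_Jobj hz (hbot _), toReal_Jprox hx (hbot _), JproxSmooth]
  linarith

theorem sufficient_decrease (hFconv : IsConvexEReal F) (hbot : ∀ x, F x ≠ ⊥) {Amax C dd w ε m : ℝ}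
    {z₀ : EuclideanSpace ℝ (Fin N)} (hAmax : ∀ x, F x ≠ ⊤ → ‖A x‖ ≤ Amax)
    (herr : ∀ y, Jobj F A y ≤ Jobj F A z₀ → ∀ x ∈ closedBall y dd,
      ‖A x - Alin A A' y x‖ ≤ C * ‖x - y‖ ^ 2)
    (hm : ∀ x, (m : EReal) ≤ F x) (hβ : 0 < β) (hε : 0 ≤ ε) (hw0 : 0 < w) (hw1 : w ≤ 1)
    (hw2 : w ≤ dd / √(2 * β⁻¹ * ((Jobj F A z₀).toReal - m)))
    (hwA : w * (2 * C * Amax) ≤ β - ε) (hz₀ : F z₀ ≠ ⊤) {z x z' : EuclideanSpace ℝ (Fin N)}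
    (hz : F z ≠ ⊤) (hzJ : Jobj F A z ≤ Jobj F A z₀)
    (hdec : Jprox F A A' β z x ≤ Jprox F A A' β z z) (hz' : z' = (1 - w) • z + w • x) :
    F x ≠ ⊤ ∧ F z' ≠ ⊤ ∧ Jobj F A z' ≤ Jobj F A z₀ ∧
      (Jobj F A z').toReal + w * (ε / 2) * ‖x - z‖ ^ 2 ≤ (Jobj F A z).toReal ∧
      (Jobj F A z').toReal ≤ (1 - w) * (Jobj F A z).toReal + w * (Jprox F A A' β z x).toReal := by
  rw [Jprox_self, Jobj_eq_coe hz (hbot z)] at hdec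
  have hx : F x ≠ ⊤ := by
    rintro hx
    rw [Jprox_eq_coe_add, hx, EReal.coe_add_top, top_le_iff] at hdec
    exact EReal.coe_ne_top _ hdec
  rw [Jprox_eq_coe hx (hbot x), EReal.coe_le_coe_iff] at hdec
  have hzJR := (Jobj_le_Jobj_iff hz (hbot z) hz₀ (hbot z₀)).1 hzJ
  rw [toReal_Jobj hz (hbot z)] at hzJR
  have hmx : m ≤ (F x).toReal :=
    (EReal.toReal_le_toReal (hm x) (EReal.coe_ne_bot m) hx).trans_eq' (EReal.toReal_coe m).symm
  have hsmall : β / 2 * ‖x - z‖ ^ 2 ≤ (Jobj F A z₀).toReal - m := by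
    have : β / 2 * ‖x - z‖ ^ 2 ≤ JproxSmooth A A' β z x :=
      le_add_of_nonneg_left (by positivity)
    linarith
  have hball : z' ∈ closedBall z dd := by
    rw [mem_closedBall, dist_eq_norm, hz', show (1 - w) • z + w • x - z = w • (x - z) by module,
      norm_smul, Real.norm_of_nonneg hw0.le]
    exact mul_le_of_le_div_sqrt hβ hw0 hsmall hw2
  obtain ⟨hz'F, hJ⟩ := toReal_Jobj_step_le hFconv hbot hAmax hw0 hw1 hwA hz hx hz'
    (herr z hzJ z' hball)
  rw [toReal_Jprox hx (hbot x)] at hJ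
  rw [toReal_Jobj hz (hbot z)] at hJ ⊢
  have hdecr : (Jobj F A z').toReal + w * (ε / 2) * ‖x - z‖ ^ 2
      ≤ 1 / 2 * ‖A z‖ ^ 2 + (F z).toReal := by
    linarith [mul_le_mul_of_nonneg_left hdec hw0.le]
  have hslack : 0 ≤ w * (ε / 2) * ‖x - z‖ ^ 2 := by positivity
  refine ⟨hx, hz'F, ?_, hdecr, by rw [toReal_Jprox hx (hbot x)]; linarith⟩
  rw [Jobj_le_Jobj_iff hz'F (hbot z') hz₀ (hbot z₀)]
  linarith

theorem sufficient_decrease_iterates (hFconv : IsConvexEReal F) (hbot : ∀ x, F x ≠ ⊥)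
    {Amax C dd w ε m : ℝ}
    {z xt : ℕ → EuclideanSpace ℝ (Fin N)} (hAmax : ∀ x, F x ≠ ⊤ → ‖A x‖ ≤ Amax)
    (herr : ∀ y, Jobj F A y ≤ Jobj F A (z 0) → ∀ x ∈ closedBall y dd,
      ‖A x - Alin A A' y x‖ ≤ C * ‖x - y‖ ^ 2)
    (hm : ∀ x, (m : EReal) ≤ F x) (hβ : 0 < β) (hε : 0 ≤ ε) (hw0 : 0 < w) (hw1 : w ≤ 1)
    (hw2 : w ≤ dd / √(2 * β⁻¹ * ((Jobj F A (z 0)).toReal - m)))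
    (hwA : w * (2 * C * Amax) ≤ β - ε) (hz0 : F (z 0) ≠ ⊤)
    (hrec : ∀ k, z (k + 1) = (1 - w) • z k + w • xt k)
    (hdec : ∀ k, Jprox F A A' β (z k) (xt k) ≤ Jprox F A A' β (z k) (z k)) (k : ℕ) :
    F (z k) ≠ ⊤ ∧ F (xt k) ≠ ⊤ ∧
      (Jobj F A (z (k + 1))).toReal + w * (ε / 2) * ‖xt k - z k‖ ^ 2 ≤ (Jobj F A (z k)).toReal ∧
      (Jobj F A (z (k + 1))).toReal
        ≤ (1 - w) * (Jobj F A (z k)).toReal + w * (Jprox F A A' β (z k) (xt k)).toReal := by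
  have step := fun k (hz : F (z k) ≠ ⊤) (hzJ : Jobj F A (z k) ≤ Jobj F A (z 0)) =>
    sufficient_decrease hFconv hbot hAmax herr hm hβ hε hw0 hw1 hw2 hwA hz0 hz hzJ (hdec k)
      (hrec k)
  have hsub : ∀ k, F (z k) ≠ ⊤ ∧ Jobj F A (z k) ≤ Jobj F A (z 0) := by
    intro k
    induction k with
    | zero => exact ⟨hz0, le_rfl⟩
    | succ k ih => exact ⟨(step k ih.1 ih.2).2.1, (step k ih.1 ih.2).2.2.1⟩
  obtain ⟨hxt, -, -, hdecr, hconv⟩ := step k (hsub k).1 (hsub k).2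
  exact ⟨(hsub k).1, hxt, hdecr, hconv⟩

theorem isMinOn_Jprox_of_tendsto (hbot : ∀ x, F x ≠ ⊥) (hFlsc : LowerSemicontinuous F)
    {zs xs es : ℕ → EuclideanSpace ℝ (Fin N)} {x : EuclideanSpace ℝ (Fin N)} (hx : F x ≠ ⊤)
    (hzs : Tendsto zs atTop (𝓝 x)) (hxs : Tendsto xs atTop (𝓝 x)) (hes : Tendsto es atTop (𝓝 0))
    (hA : Tendsto (fun k => A (zs k)) atTop (𝓝 (A x)))
    (hA' : Tendsto (fun k => A' (zs k)) atTop (𝓝 (A' x))) (hFxs : ∀ k, F (xs k) ≠ ⊤)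
    (he : ∀ k y, Jprox F A A' β (zs k) (xs k) + ((⟪es k, y - xs k⟫ : ℝ) : EReal)
      ≤ Jprox F A A' β (zs k) y) :
    IsMinOn (Jprox F A A' β x) univ x := by
  refine isMinOn_univ_iff.2 fun y => ?_
  by_cases hy : F y = ⊤
  · simp [Jprox_eq_coe_add, hy]
  have hlim : Tendsto (fun k => JproxSmooth A A' β (zs k) y + (F y).toReal
      - JproxSmooth A A' β (zs k) (xs k) - ⟪es k, y - xs k⟫) atTop
      (𝓝 (JproxSmooth A A' β x y + (F y).toReal - JproxSmooth A A' β x x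
        - ⟪(0 : EuclideanSpace ℝ (Fin N)), y - x⟫)) :=
    (((tendsto_JproxSmooth hzs tendsto_const_nhds hA hA').add_const _).sub
      (tendsto_JproxSmooth hzs hxs hA hA')).sub (hes.inner (tendsto_const_nhds.sub hxs))
  have hle : ∀ k, F (xs k) ≤ ((JproxSmooth A A' β (zs k) y + (F y).toReal
      - JproxSmooth A A' β (zs k) (xs k) - ⟪es k, y - xs k⟫ : ℝ) : EReal) := by
    intro k
    have h := he k y
    rw [Jprox_eq_coe (hFxs k) (hbot _), Jprox_eq_coe hy (hbot y), ← EReal.coe_add,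
      EReal.coe_le_coe_iff] at h
    rw [← EReal.coe_toReal (hFxs k) (hbot _), EReal.coe_le_coe_iff]
    linarith
  have h := hFlsc.le_coe_of_tendsto hxs hlim hle
  rw [← EReal.coe_toReal hx (hbot x), EReal.coe_le_coe_iff, inner_zero_left] at h
  rw [Jprox_eq_coe hx (hbot x), Jprox_eq_coe hy (hbot y), EReal.coe_le_coe_iff]
  linarith

theorem Jobj_eq_of_tendsto (hbot : ∀ x, F x ≠ ⊥) (hFlsc : LowerSemicontinuous F) {w L : ℝ}
    (hw : 0 < w) {zs zs' xs es : ℕ → EuclideanSpace ℝ (Fin N)} {x : EuclideanSpace ℝ (Fin N)}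
    (hx : F x ≠ ⊤) (hzs : Tendsto zs atTop (𝓝 x)) (hxs : Tendsto xs atTop (𝓝 x))
    (hes : Tendsto es atTop (𝓝 0)) (hA : Tendsto (fun k => A (zs k)) atTop (𝓝 (A x)))
    (hA' : Tendsto (fun k => A' (zs k)) atTop (𝓝 (A' x)))
    (hFzs : ∀ k, F (zs k) ≠ ⊤) (hFxs : ∀ k, F (xs k) ≠ ⊤)
    (hJ : Tendsto (fun k => (Jobj F A (zs k)).toReal) atTop (𝓝 L))
    (hJ' : Tendsto (fun k => (Jobj F A (zs' k)).toReal) atTop (𝓝 L))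
    (hstep : ∀ k, (Jobj F A (zs' k)).toReal
      ≤ (1 - w) * (Jobj F A (zs k)).toReal + w * (Jprox F A A' β (zs k) (xs k)).toReal)
    (he : ∀ k, Jprox F A A' β (zs k) (xs k) + ((⟪es k, x - xs k⟫ : ℝ) : EReal)
      ≤ Jprox F A A' β (zs k) x) :
    Jobj F A x = L := by
  rw [Jobj_eq_coe hx (hbot x), EReal.coe_eq_coe_iff]
  apply le_antisymm
  · have hle : ∀ k,
        F (zs k) ≤ (((Jobj F A (zs k)).toReal - 1 / 2 * ‖A (zs k)‖ ^ 2 : ℝ) : EReal) := by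
      intro k
      rw [toReal_Jobj (hFzs k) (hbot _), add_sub_cancel_left, EReal.coe_toReal (hFzs k) (hbot _)]
    have h := hFlsc.le_coe_of_tendsto hzs (hJ.sub ((hA.norm.pow 2).const_mul _)) hle
    rw [← EReal.coe_toReal hx (hbot x), EReal.coe_le_coe_iff] at h
    linarith
  · have hle : ∀ k, (Jobj F A (zs' k)).toReal + w * ⟪es k, x - xs k⟫
        ≤ (1 - w) * (Jobj F A (zs k)).toReal
          + w * (JproxSmooth A A' β (zs k) x + (F x).toReal) := by
      intro k
      have h := he k
      rw [Jprox_eq_coe (hFxs k) (hbot _), Jprox_eq_coe hx (hbot x), ← EReal.coe_add,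
        EReal.coe_le_coe_iff] at h
      have := hstep k
      rw [toReal_Jprox (hFxs k) (hbot _)] at this
      linarith [mul_le_mul_of_nonneg_left h hw.le]
    have h := le_of_tendsto_of_tendsto'
      (hJ'.add ((hes.inner (tendsto_const_nhds.sub hxs)).const_mul w))
      ((hJ.const_mul (1 - w)).add
        (((tendsto_JproxSmooth hzs tendsto_const_nhds hA hA').add_const _).const_mul w)) hle
    rw [inner_zero_left, JproxSmooth_self] at h
    exact le_of_mul_le_mul_left (by linarith) hw

theorem isMinOn_Jprox_and_Jobj_eq_of_subseq (hbot : ∀ x, F x ≠ ⊥)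
    (hFlsc : LowerSemicontinuous F)
    (hderiv : ∀ x, F x ≠ ⊤ → HasFDerivAt A (A' x) x) (hA'cont : ContinuousOn A' {x | F x ≠ ⊤})
    {w L : ℝ} (hw : 0 < w) {z xt e : ℕ → EuclideanSpace ℝ (Fin N)}
    (hFz : ∀ k, F (z k) ≠ ⊤) (hFxt : ∀ k, F (xt k) ≠ ⊤)
    (hJ : Tendsto (fun k => (Jobj F A (z k)).toReal) atTop (𝓝 L))
    (hd : Tendsto (fun k => ‖xt k - z k‖) atTop (𝓝 0))
    (hstep : ∀ k, (Jobj F A (z (k + 1))).toReal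
      ≤ (1 - w) * (Jobj F A (z k)).toReal + w * (Jprox F A A' β (z k) (xt k)).toReal)
    (he : ∀ k y, Jprox F A A' β (z k) (xt k) + ((⟪e k, y - xt k⟫ : ℝ) : EReal)
      ≤ Jprox F A A' β (z k) y)
    (he0 : Tendsto e atTop (𝓝 0)) {φ : ℕ → ℕ} (hφ : StrictMono φ) {x : EuclideanSpace ℝ (Fin N)}
    (hzφ : Tendsto (z ∘ φ) atTop (𝓝 x)) :
    F x ≠ ⊤ ∧ IsMinOn (Jprox F A A' β x) univ x ∧ Jobj F A x = L := by
  have hφt := hφ.tendsto_atTop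
  have hx : F x ≠ ⊤ := by
    refine ne_top_of_le_ne_top (EReal.coe_ne_top L)
      (hFlsc.le_coe_of_tendsto hzφ (hJ.comp hφt) fun k =>
        (le_Jobj _).trans_eq (coe_toReal_Jobj (hFz _) (hbot _)).symm)
  have hxt : Tendsto (fun k => xt (φ k)) atTop (𝓝 x) := by
    simpa using hzφ.add (tendsto_zero_iff_norm_tendsto_zero.2 (hd.comp hφt))
  have hA : Tendsto (fun k => A (z (φ k))) atTop (𝓝 (A x)) :=
    (hderiv x hx).continuousAt.tendsto.comp hzφ
  have hA' : Tendsto (fun k => A' (z (φ k))) atTop (𝓝 (A' x)) :=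
    (hA'cont x hx).tendsto.comp
      (tendsto_nhdsWithin_iff.2 ⟨hzφ, .of_forall fun k => hFz (φ k)⟩)
  have heφ := he0.comp hφt
  exact ⟨hx, isMinOn_Jprox_of_tendsto hbot hFlsc hx hzφ hxt heφ hA hA' (fun _ => hFxt _)
      (fun _ => he _),
    Jobj_eq_of_tendsto hbot hFlsc hw hx hzφ hxt heφ hA hA' (fun _ => hFz _) (fun _ => hFxt _)
      (hJ.comp hφt) (hJ.comp ((tendsto_add_atTop_nat 1).comp hφt)) (fun _ => hstep _)
      (fun _ => he _ x)⟩

theorem neg_inner_le_of_isMinOn_Jprox (hFconv : IsConvexEReal F) (hbot : ∀ x, F x ≠ ⊥)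
    {x : EuclideanSpace ℝ (Fin N)} (hx : F x ≠ ⊤) (hmin : IsMinOn (Jprox F A A' β x) univ x)
    (y : EuclideanSpace ℝ (Fin N)) :
    F x + ((-⟪(ContinuousLinearMap.adjoint (A' x)) (A x), y - x⟫ : ℝ) : EReal) ≤ F y := by
  by_cases hy : F y = ⊤
  · simp [hy]
  rw [ContinuousLinearMap.adjoint_inner_left, ← EReal.coe_toReal hx (hbot x),
    ← EReal.coe_toReal hy (hbot y), ← EReal.coe_add, EReal.coe_le_coe_iff]
  suffices (F x).toReal - ⟪A x, A' x (y - x)⟫ - (F y).toReal ≤ 0 by linarith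
  refine nonpos_of_forall_le_mul
    (K := 1 / 2 * ‖A' x (y - x)‖ ^ 2 + β / 2 * ‖y - x‖ ^ 2) fun t ht0 ht1 => ?_
  obtain ⟨hyt, hFyt⟩ := hFconv.combo_le hbot hx hy (sub_nonneg.2 ht1) ht0.le (by ring)
  have h := isMinOn_univ_iff.1 hmin ((1 - t) • x + t • y)
  rw [Jprox_eq_coe hx (hbot x), Jprox_eq_coe hyt (hbot _), EReal.coe_le_coe_iff,
    JproxSmooth_self, JproxSmooth_smul_add_smul] at h
  refine le_of_mul_le_mul_left ?_ ht0
  linarith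

end ProxLinear

theorem stmt_7_general {N M : ℕ}
    (F : EuclideanSpace ℝ (Fin N) → EReal)
    (A : EuclideanSpace ℝ (Fin N) → EuclideanSpace ℝ (Fin M))
    (A' : EuclideanSpace ℝ (Fin N) → (EuclideanSpace ℝ (Fin N) →L[ℝ] EuclideanSpace ℝ (Fin M)))
    -- Assumption 2.1
    (hFconv : ∀ x y : EuclideanSpace ℝ (Fin N), ∀ a b : ℝ, 0 ≤ a → 0 ≤ b → a + b = 1 →
      F (a • x + b • y) ≤ (a : EReal) * F x + (b : EReal) * F y)
    (hFnebot : ∀ x, F x ≠ ⊥)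
    (hFlsc : LowerSemicontinuous F)
    (hInf : ⊥ < ⨅ x, F x)
    (hderiv : ∀ x, F x ≠ ⊤ → HasFDerivAt A (A' x) x)
    (hA'cont : ContinuousOn A' {x | F x ≠ ⊤})
    (z xt : ℕ → EuclideanSpace ℝ (Fin N))
    (hz0 : F (z 0) ≠ ⊤)
    (Amax C dd : ℝ) (hC : 0 < C)
    (hAmax : ∀ x, F x ≠ ⊤ → ‖A x‖ ≤ Amax)
    (herr : ∀ y, Jobj F A y ≤ Jobj F A (z 0) → ∀ x ∈ closedBall y dd,
      ‖A x - Alin A A' y x‖ ≤ C * ‖x - y‖ ^ 2)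
    -- the step-size bound (2.3)
    (β ε w : ℝ) (hβ : 0 < β) (hε : 0 < ε)
    (hw0 : 0 < w) (hw1 : w ≤ 1)
    (hw2 : w ≤ dd / Real.sqrt (2 * β⁻¹ * (Jobj F A (z 0) - ⨅ x, F x).toReal))
    (hw3 : w ≤ (β - ε) / (2 * C * Amax))
    -- the iteration
    (hrec : ∀ k, z (k + 1) = (1 - w) • z k + w • xt k)
    (hdec : ∀ k, Jprox F A A' β (z k) (xt k) ≤ Jprox F A A' β (z k) (z k))
    -- the inexact subdifferential condition: `e^k ∈ ∂J̃_{z^k}(x̃^k)` with `e^k → 0`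
    (e : ℕ → EuclideanSpace ℝ (Fin N))
    (he : ∀ k y, Jprox F A A' β (z k) (xt k) + ((⟪e k, y - xt k⟫ : ℝ) : EReal)
      ≤ Jprox F A A' β (z k) y)
    (he0 : Tendsto e atTop (𝓝 0)) :
    ∃ L : ℝ, Tendsto (fun k => Jobj F A (z k)) atTop (𝓝 ((L : ℝ) : EReal)) ∧
      ∀ xh : EuclideanSpace ℝ (Fin N),
        (∃ φ : ℕ → ℕ, StrictMono φ ∧ Tendsto (z ∘ φ) atTop (𝓝 xh)) →
        (∀ y, F xh + ((-⟪(ContinuousLinearMap.adjoint (A' xh)) (A xh), y - xh⟫ : ℝ) : EReal)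
            ≤ F y) ∧
          Jobj F A xh = ((L : ℝ) : EReal) := by
  have hinf : (⨅ x, F x) ≠ ⊤ := ne_top_of_le_ne_top hz0 (iInf_le _ _)
  have hm : ∀ x, (((⨅ x, F x).toReal : ℝ) : EReal) ≤ F x := fun x =>
    (EReal.coe_toReal hinf hInf.ne').trans_le (iInf_le _ x)
  rw [EReal.toReal_sub (Jobj_ne_top hz0 (hFnebot _)) (Jobj_ne_bot hz0 (hFnebot _)) hinf
    hInf.ne'] at hw2
  have hwA : w * (2 * C * Amax) ≤ β - ε := mul_le_of_le_div_of_pos hw0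
    (by have := (norm_nonneg _).trans (hAmax _ hz0); positivity) hw3
  have hit := sufficient_decrease_iterates hFconv hFnebot hAmax herr hm hβ hε.le hw0 hw1 hw2 hwA
    hz0 hrec hdec
  obtain ⟨hJ, hd⟩ := tendsto_of_add_mul_sq_le (by positivity : 0 < w * (ε / 2))
    (fun k => le_toReal_Jobj hm (hit k).1 (hFnebot _)) fun k => (hit k).2.2.1
  refine ⟨_, (EReal.tendsto_coe.2 hJ).congr fun k => coe_toReal_Jobj (hit k).1 (hFnebot _),
    fun xh ⟨φ, hφ, hzφ⟩ => ?_⟩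
  obtain ⟨hxh, hmin, hJxh⟩ := isMinOn_Jprox_and_Jobj_eq_of_subseq hFnebot hFlsc hderiv hA'cont hw0
    (fun k => (hit k).1) (fun k => (hit k).2.1) hJ hd (fun k => (hit k).2.2.2) he he0 hφ hzφ
  exact ⟨neg_inner_le_of_isMinOn_Jprox hFconv hFnebot hxh hmin, hJxh⟩

/-- Theorem 2.1(ii): every accumulation point `x̂` of `(z^k)` satisfies the
criticality condition `−A'(x̂)*A(x̂) ∈ ∂F(x̂)` and `J(x̂) = L := lim_k J(z^k)`. -/
theorem stmt_7 {N M : ℕ}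
    (F : EuclideanSpace ℝ (Fin N) → EReal)
    (A : EuclideanSpace ℝ (Fin N) → EuclideanSpace ℝ (Fin M))
    (A' : EuclideanSpace ℝ (Fin N) → (EuclideanSpace ℝ (Fin N) →L[ℝ] EuclideanSpace ℝ (Fin M)))
    -- Assumption 2.1
    (hFconv : ∀ x y : EuclideanSpace ℝ (Fin N), ∀ a b : ℝ, 0 ≤ a → 0 ≤ b → a + b = 1 →
      F (a • x + b • y) ≤ (a : EReal) * F x + (b : EReal) * F y)
    (hFproper : ∃ x, F x ≠ ⊤)
    (hFnebot : ∀ x, F x ≠ ⊥)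
    (hFlsc : LowerSemicontinuous F)
    (hInf : ⊥ < ⨅ x, F x)
    (hderiv : ∀ x, F x ≠ ⊤ → HasFDerivAt A (A' x) x)
    (hA'cont : ContinuousOn A' {x | F x ≠ ⊤})
    (z xt : ℕ → EuclideanSpace ℝ (Fin N))
    (hz0 : F (z 0) ≠ ⊤)
    (hlev : IsBounded {x | Jobj F A x ≤ Jobj F A (z 0)})
    (Amax C dd : ℝ) (hC : 0 < C) (hdd : 0 < dd)
    (hAmax : ∀ x, F x ≠ ⊤ → ‖A x‖ ≤ Amax)
    (herr : ∀ y, Jobj F A y ≤ Jobj F A (z 0) → ∀ x ∈ closedBall y dd,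
      ‖A x - Alin A A' y x‖ ≤ C * ‖x - y‖ ^ 2)
    -- the step-size bound (2.3)
    (β ε w : ℝ) (hβ : 0 < β) (hε : 0 < ε)
    (hw0 : 0 < w) (hw1 : w ≤ 1)
    (hw2 : w ≤ dd / Real.sqrt (2 * β⁻¹ * (Jobj F A (z 0) - ⨅ x, F x).toReal))
    (hw3 : w ≤ (β - ε) / (2 * C * Amax))
    -- the iteration
    (hrec : ∀ k, z (k + 1) = (1 - w) • z k + w • xt k)
    (hdec : ∀ k, Jprox F A A' β (z k) (xt k) ≤ Jprox F A A' β (z k) (z k))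
    -- the inexact subdifferential condition: `e^k ∈ ∂J̃_{z^k}(x̃^k)` with `e^k → 0`
    (e : ℕ → EuclideanSpace ℝ (Fin N))
    (he : ∀ k y, Jprox F A A' β (z k) (xt k) + ((⟪e k, y - xt k⟫ : ℝ) : EReal)
      ≤ Jprox F A A' β (z k) y)
    (he0 : Tendsto e atTop (𝓝 0)) :
    ∃ L : ℝ, Tendsto (fun k => Jobj F A (z k)) atTop (𝓝 ((L : ℝ) : EReal)) ∧
      ∀ xh : EuclideanSpace ℝ (Fin N),
        (∃ φ : ℕ → ℕ, StrictMono φ ∧ Tendsto (z ∘ φ) atTop (𝓝 xh)) →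
        (∀ y, F xh + ((-⟪(ContinuousLinearMap.adjoint (A' xh)) (A xh), y - xh⟫ : ℝ) : EReal)
            ≤ F y) ∧
          Jobj F A xh = ((L : ℝ) : EReal) :=
  stmt_7_general F A A' hFconv hFnebot hFlsc hInf hderiv hA'cont z xt hz0 Amax C dd hC hAmax herr β
    ε w hβ hε hw0 hw1 hw2 hw3 hrec hdec e he he0
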